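/- arXiv:2009.12982 — 4 statements merged into one kernel-verified Lean document; each statement's English description precedes it below -/
import Mathlib

section
/- Let 0 < δ ≤ 1/2 and define trunc_δ : [0,1] → {0,1} by trunc_δ(x) = 1 if x ≥ 1 − δ and 0 otherwise. Then for all x ∈ [0,1], (x − trunc_δ(x))² ≤ (1/δ) · (x − x²). -/
/-- Let `0 < δ ≤ 1/2` and `trunc_δ(x) = 1` if `x ≥ 1 − δ`, else `0`.
Then for all `x ∈ [0,1]`, `(x − trunc_δ(x))² ≤ (1/δ)·(x − x²)`. -/
theorem trunc_sq_error_le (δ : ℝ) (hδ0 : 0 < δ) (hδ : δ ≤ 1 / 2)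
    (x : ℝ) (hx0 : 0 ≤ x) (hx1 : x ≤ 1) :
    (x - (if 1 - δ ≤ x then (1 : ℝ) else 0)) ^ 2 ≤ (1 / δ) * (x - x ^ 2) := by
  rw [div_mul_eq_mul_div, le_div_iff₀ hδ0]
  split_ifs with h
  · nlinarith [sq_nonneg (1 - x), sq_nonneg (x - δ)]
  · have h1 : x < 1 - δ := lt_of_not_ge h
    have h2 : x * δ ≤ δ := mul_le_of_le_one_left hδ0.le hx1
    nlinarith [mul_nonneg hx0 (show (0:ℝ) ≤ 1 - x - x * δ by linarith)]
end

section
/- For any real d ≥ 1 (d an integer) and any real 0 ≤ λ ≤ 1, it holds that λ(1 − λ^d) ≤ 2 · (λ^{d+1}(1 − λ))^{1/(d+1)}. -/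
/-! Bernoulli's inequality gives `1 - λ^d ≤ d (1 - λ)`, and `(1 - λ^d)^(d+1) ≤ 1 - λ^d` since
`0 ≤ 1 - λ^d ≤ 1`; together, `(λ (1 - λ^d))^(d+1) ≤ d λ^(d+1) (1 - λ)`. Taking `(d+1)`-st roots
and using `d ≤ 2^(d+1)` yields the claim. -/

open Real

lemma one_sub_pow_le_mul_one_sub {x : ℝ} (hx : -1 ≤ x) (n : ℕ) : 1 - x ^ n ≤ n * (1 - x) := by
  linarith [one_add_mul_sub_le_pow hx n]

lemma mul_one_sub_pow_pow_succ_le {x : ℝ} (h0 : 0 ≤ x) (h1 : x ≤ 1) (n : ℕ) :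
    (x * (1 - x ^ n)) ^ (n + 1) ≤ n * (x ^ (n + 1) * (1 - x)) := by
  have hxn : x ^ n ≤ 1 := pow_le_one₀ h0 h1
  have hpow : (1 - x ^ n) ^ (n + 1) ≤ 1 - x ^ n :=
    pow_le_of_le_one (by linarith) (by linarith [pow_nonneg h0 n]) n.succ_ne_zero
  calc (x * (1 - x ^ n)) ^ (n + 1) = x ^ (n + 1) * (1 - x ^ n) ^ (n + 1) := mul_pow _ _ _
    _ ≤ x ^ (n + 1) * (1 - x ^ n) := by gcongr
    _ ≤ x ^ (n + 1) * (n * (1 - x)) := by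
      gcongr; exact one_sub_pow_le_mul_one_sub (by linarith) n
    _ = n * (x ^ (n + 1) * (1 - x)) := by ring

lemma natCast_rpow_one_div_succ_le_two (n : ℕ) : (n : ℝ) ^ ((1 : ℝ) / (n + 1)) ≤ 2 := by
  rw [one_div, rpow_inv_le_iff_of_pos n.cast_nonneg zero_le_two (by positivity),
    ← Nat.cast_add_one, rpow_natCast]
  have := one_add_mul_le_pow (by norm_num : (-2 : ℝ) ≤ 1) (n + 1)
  norm_num at this
  linarith

theorem lam_one_sub_pow_le_general (d : ℕ)
    (lam : ℝ) (h0 : 0 ≤ lam) (h1 : lam ≤ 1) :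
    lam * (1 - lam ^ d) ≤
      2 * (lam ^ (d + 1) * (1 - lam)) ^ ((1 : ℝ) / (d + 1)) := by
  have hx : 0 ≤ lam * (1 - lam ^ d) := mul_nonneg h0 (by linarith [pow_le_one₀ h0 h1 (n := d)])
  have hy : 0 ≤ lam ^ (d + 1) * (1 - lam) := mul_nonneg (pow_nonneg h0 _) (by linarith)
  calc lam * (1 - lam ^ d) ≤ (d * (lam ^ (d + 1) * (1 - lam))) ^ ((1 : ℝ) / (d + 1)) := by
        rw [one_div, le_rpow_inv_iff_of_pos hx (by positivity) (by positivity),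
          ← Nat.cast_add_one, rpow_natCast]
        exact mul_one_sub_pow_pow_succ_le h0 h1 d
    _ = (d : ℝ) ^ ((1 : ℝ) / (d + 1)) * (lam ^ (d + 1) * (1 - lam)) ^ ((1 : ℝ) / (d + 1)) :=
        mul_rpow d.cast_nonneg hy
    _ ≤ 2 * (lam ^ (d + 1) * (1 - lam)) ^ ((1 : ℝ) / (d + 1)) := by
        gcongr; exact natCast_rpow_one_div_succ_le_two d

/-- For any integer `d ≥ 1` and any real `0 ≤ λ ≤ 1`,
`λ(1 − λ^d) ≤ 2 · (λ^{d+1}(1 − λ))^{1/(d+1)}`. -/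
theorem lam_one_sub_pow_le (d : ℕ) (hd : 1 ≤ d)
    (lam : ℝ) (h0 : 0 ≤ lam) (h1 : lam ≤ 1) :
    lam * (1 - lam ^ d) ≤
      2 * (lam ^ (d + 1) * (1 - lam)) ^ ((1 : ℝ) / (d + 1)) :=
  lam_one_sub_pow_le_general d lam h0 h1
end

section
/- Let ψ be a vector in H_A ⊗ H_B and, for each u ∈ F_q^m, let A^u be a Hermitian matrix with 0 ≤ A^u ≤ I acting on H_A. Define the local variance Var_local = (1/2)·E_{(u,v)∼C} ⟨ψ| (A^u − A^v)² ⊗ I |ψ⟩ over a random hypercube edge, and the global variance Var_global = (1/2)·E_{u,v∼F_q^m} ⟨ψ| (A^u − A^v)² ⊗ I |ψ⟩ over two independent uniform points. Then Var_global ≤ m · Var_local. -/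
open scoped ComplexOrder

/-- The action of `M ⊗ I` on a vector `ψ` of the bipartite space
`ℂ^{nA} ⊗ ℂ^{nB} ≅ ℂ^{nA × nB}`, where `M` acts on the first factor. -/
noncomputable def tensorApplyFst {nA nB : ℕ} (M : Matrix (Fin nA) (Fin nA) ℂ)
    (ψ : Fin nA × Fin nB → ℂ) : Fin nA × Fin nB → ℂ :=
  fun p => ∑ a', M p.1 a' * ψ (a', p.2)

/-- The standard inner product `⟨φ|χ⟩` on `ℂ^{nA × nB}` (conjugate-linear in the
first argument). -/
noncomputable def cInner {nA nB : ℕ} (φ χ : Fin nA × Fin nB → ℂ) : ℂ :=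
  ∑ p, (starRingEnd ℂ) (φ p) * χ p

/-!
Let `Eᵢ` average a function on `α^ι` over its `i`-th coordinate. The `Eᵢ` are commuting
orthogonal projections whose product is the projection onto the constants, and for commuting
projections `1 - pq = (1 - p) + (1 - q) - (1 - p)(1 - q) ≤ (1 - p) + (1 - q)`; hence
`1 - ∏ᵢ Eᵢ ≤ ∑ᵢ (1 - Eᵢ)` in the Loewner order. The two sides are the Laplacians of the complete
graph and of the hypercube-edge graph, and their quadratic forms are the global and the local
variance: this is the Efron–Stein inequality. The quantum statement follows by applying it to
every coordinate of the vectors `(Aᵘ ⊗ I)ψ`, since `⟨ψ|(B ⊗ I)²|ψ⟩ = ‖(B ⊗ I)ψ‖²` for Hermitian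
`B`.
-/

open scoped MatrixOrder Kronecker
open Finset Function Matrix

theorem IsStarProjection.one_sub_mul_le {R : Type*} [Ring R] [PartialOrder R] [StarRing R]
    [StarOrderedRing R] {p q : R} (hp : IsStarProjection p) (hq : IsStarProjection q)
    (hpq : Commute p q) : 1 - p * q ≤ (1 - p) + (1 - q) := by
  have hpq' : Commute (1 - p) (1 - q) :=
    (Commute.one_right _).sub_right ((Commute.one_left q).sub_left hpq)
  rw [← sub_nonneg]
  convert (hp.one_sub.mul hq.one_sub hpq').nonneg using 1
  noncomm_ring

theorem Matrix.sum_sum_mul_sq_sub_eq {X : Type*} [Fintype X] [DecidableEq X] (W : Matrix X X ℝ)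
    (hW : W.IsHermitian) (hrow : ∀ u, ∑ v, W u v = 1) (h : X → ℝ) :
    ∑ u, ∑ v, W u v * (h u - h v) ^ 2 = 2 * (h ⬝ᵥ ((1 - W) *ᵥ h)) := by
  have hcol : ∀ v, ∑ u, W u v = 1 := fun v => by
    simpa [← hW.apply v] using hrow v
  have expand : ∀ u v, W u v * (h u - h v) ^ 2
      = W u v * h u ^ 2 - 2 * (h u * (W u v * h v)) + W u v * h v ^ 2 := fun u v => by ring
  simp only [expand, sum_add_distrib, sum_sub_distrib, ← sum_mul, ← mul_sum, hrow]
  rw [sum_comm (f := fun u v => W u v * h v ^ 2)]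
  simp only [← sum_mul, hcol, sub_mulVec, one_mulVec, dotProduct_sub]
  simp only [dotProduct, mulVec, one_mul, ← sq]
  ring

section CoordinateAveraging

variable {ι : Type*} (α : Type*) [Fintype ι] [DecidableEq ι] [Fintype α] [DecidableEq α]

/-- Averaging over the coordinates in `s`, i.e. the conditional expectation given the coordinates
outside `s`, as an operator on `(ι → α) → ℝ`. -/
noncomputable def coordAvg (s : Finset ι) : Matrix (ι → α) (ι → α) ℝ :=
  of fun u v => if ∀ j ∉ s, u j = v j then ((Fintype.card α : ℝ) ^ #s)⁻¹ else 0

variable {α}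

theorem sum_ite_forall_ne_eq {β : Type*} [AddCommMonoid β] (i : ι) (u : ι → α)
    (f : (ι → α) → β) :
    ∑ v, (if ∀ j ≠ i, u j = v j then f v else 0) = ∑ c, f (update u i c) := by
  rw [← sum_filter, ← sum_image (fun _ _ _ _ h => update_injective u i h)]
  congr 1
  ext v
  simp only [mem_filter, mem_univ, true_and, mem_image, update_eq_iff]
  exact ⟨fun h => ⟨v i, rfl, h⟩, fun ⟨_, _, h⟩ => h⟩

theorem sum_coordAvg_singleton_mul (i : ι) (u : ι → α) (f : (ι → α) → ℝ) :
    ∑ v, coordAvg α {i} u v * f v = (Fintype.card α : ℝ)⁻¹ * ∑ c, f (update u i c) := by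
  simp only [coordAvg, of_apply, mem_singleton, card_singleton, pow_one, ite_mul, zero_mul,
    mul_sum]
  exact sum_ite_forall_ne_eq i u _

theorem coordAvg_empty : coordAvg α (∅ : Finset ι) = 1 := by
  ext u v
  simp [coordAvg, one_apply, funext_iff]

theorem coordAvg_univ_apply (u v : ι → α) :
    coordAvg α (univ : Finset ι) u v = (Fintype.card (ι → α) : ℝ)⁻¹ := by
  simp [coordAvg]

theorem isSelfAdjoint_coordAvg (s : Finset ι) : IsSelfAdjoint (coordAvg α s) := by
  ext u v
  simp only [star_apply, coordAvg, of_apply, star_trivial]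
  simp_rw [eq_comm (a := u _)]

theorem coordAvg_insert {i : ι} {s : Finset ι} (hi : i ∉ s) :
    coordAvg α (insert i s) = coordAvg α {i} * coordAvg α s := by
  ext u v
  rw [mul_apply, sum_coordAvg_singleton_mul]
  have key : ∀ c, (∀ j ∉ s, update u i c j = v j) ↔ c = v i ∧ ∀ j ∉ insert i s, u j = v j := by
    intro c
    constructor
    · intro h
      refine ⟨by simpa using h i hi, fun j hj => ?_⟩
      rw [mem_insert, not_or] at hj
      simpa [hj.1] using h j hj.2
    · rintro ⟨rfl, h⟩ j hj
      by_cases hji : j = i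
      · simp [hji]
      · simpa [hji] using h j (by simp [hji, hj])
  simp only [coordAvg, of_apply, key, ite_and, sum_ite_eq', mem_univ, if_true,
    card_insert_of_notMem hi]
  split_ifs <;> simp [pow_succ, mul_comm]

theorem coordAvg_singleton_mul_self (i : ι) :
    coordAvg α {i} * coordAvg α {i} = coordAvg α {i} := by
  ext u v
  have : Nonempty α := ⟨u i⟩
  have key : ∀ c, (∀ j ∉ ({i} : Finset ι), update u i c j = v j) ↔
      ∀ j ∉ ({i} : Finset ι), u j = v j := fun c =>
    forall_congr' fun j => by by_cases hji : j = i <;> simp [hji]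
  rw [mul_apply, sum_coordAvg_singleton_mul]
  simp only [coordAvg, of_apply, key, sum_const, card_univ, nsmul_eq_mul]
  split_ifs <;> field_simp

theorem isStarProjection_coordAvg_singleton (i : ι) : IsStarProjection (coordAvg α {i}) :=
  ⟨coordAvg_singleton_mul_self i, isSelfAdjoint_coordAvg {i}⟩

theorem commute_coordAvg_singleton {i : ι} {s : Finset ι} (hi : i ∉ s) :
    Commute (coordAvg α {i}) (coordAvg α s) :=
  (IsSelfAdjoint.commute_iff (isSelfAdjoint_coordAvg _) (isSelfAdjoint_coordAvg _)).mpr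
    (by rw [← coordAvg_insert hi]; exact isSelfAdjoint_coordAvg _)

theorem isStarProjection_coordAvg (s : Finset ι) : IsStarProjection (coordAvg α s) := by
  induction s using Finset.induction_on with
  | empty => rw [coordAvg_empty]; exact .one _
  | insert i s hi ih =>
    rw [coordAvg_insert hi]
    exact (isStarProjection_coordAvg_singleton i).mul ih (commute_coordAvg_singleton hi)

theorem one_sub_coordAvg_le (s : Finset ι) :
    1 - coordAvg α s ≤ ∑ i ∈ s, (1 - coordAvg α {i}) := by
  induction s using Finset.induction_on with
  | empty => simp [coordAvg_empty]
  | insert i s hi ih =>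
    rw [coordAvg_insert hi, sum_insert hi]
    calc 1 - coordAvg α {i} * coordAvg α s
        ≤ (1 - coordAvg α {i}) + (1 - coordAvg α s) :=
          (isStarProjection_coordAvg_singleton i).one_sub_mul_le (isStarProjection_coordAvg s)
            (commute_coordAvg_singleton hi)
      _ ≤ (1 - coordAvg α {i}) + ∑ j ∈ s, (1 - coordAvg α {j}) := by gcongr

end CoordinateAveraging

theorem Matrix.dotProduct_mulVec_mono {X : Type*} [Fintype X] {A B : Matrix X X ℝ} (hAB : A ≤ B)
    (h : X → ℝ) : h ⬝ᵥ (A *ᵥ h) ≤ h ⬝ᵥ (B *ᵥ h) := by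
  have := (le_iff.mp hAB).dotProduct_mulVec_nonneg h
  rwa [star_trivial, sub_mulVec, dotProduct_sub, sub_nonneg] at this

section EfronStein

variable {ι α : Type*} [Fintype ι] [DecidableEq ι] [Fintype α] [DecidableEq α] [Nonempty α]

theorem sum_sum_sq_sub_eq (h : (ι → α) → ℝ) :
    ∑ u, ∑ v, (h u - h v) ^ 2 =
      2 * Fintype.card (ι → α) * (h ⬝ᵥ ((1 - coordAvg α univ) *ᵥ h)) := by
  have hN : (Fintype.card (ι → α) : ℝ) ≠ 0 := Nat.cast_ne_zero.mpr Fintype.card_ne_zero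
  have hrow : ∀ u, ∑ v, coordAvg α (univ : Finset ι) u v = 1 := fun u => by
    simp only [coordAvg_univ_apply, sum_const, card_univ, nsmul_eq_mul]
    exact mul_inv_cancel₀ hN
  rw [mul_right_comm, ← sum_sum_mul_sq_sub_eq _ (isSelfAdjoint_coordAvg univ) hrow]
  simp only [coordAvg_univ_apply, ← mul_sum]
  field_simp

theorem sum_sum_update_sq_sub_eq (i : ι) (h : (ι → α) → ℝ) :
    ∑ u, ∑ c, (h u - h (update u i c)) ^ 2 =
      2 * Fintype.card α * (h ⬝ᵥ ((1 - coordAvg α {i}) *ᵥ h)) := by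
  have hq : (Fintype.card α : ℝ) ≠ 0 := Nat.cast_ne_zero.mpr Fintype.card_ne_zero
  have hrow : ∀ u, ∑ v, coordAvg α {i} u v = 1 := fun u => by
    simpa [hq] using sum_coordAvg_singleton_mul i u 1
  rw [mul_right_comm, ← sum_sum_mul_sq_sub_eq _ (isSelfAdjoint_coordAvg {i}) hrow]
  simp only [sum_coordAvg_singleton_mul, ← mul_sum]
  field_simp

theorem efron_stein (h : (ι → α) → ℝ) :
    Fintype.card α * ∑ u, ∑ v, (h u - h v) ^ 2 ≤
      Fintype.card (ι → α) * ∑ u, ∑ i, ∑ c, (h u - h (update u i c)) ^ 2 := by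
  have key : h ⬝ᵥ ((1 - coordAvg α univ) *ᵥ h) ≤ ∑ i, h ⬝ᵥ ((1 - coordAvg α {i}) *ᵥ h) := by
    simpa only [sum_mulVec, dotProduct_sum] using
      dotProduct_mulVec_mono (one_sub_coordAvg_le univ) h
  have hswap : ∑ u, ∑ i, ∑ c, (h u - h (update u i c)) ^ 2 =
      ∑ i, ∑ u, ∑ c, (h u - h (update u i c)) ^ 2 := sum_comm
  rw [hswap, sum_sum_sq_sub_eq]
  simp only [sum_sum_update_sq_sub_eq, ← mul_sum]
  calc _ = 2 * Fintype.card α * Fintype.card (ι → α) * (h ⬝ᵥ ((1 - coordAvg α univ) *ᵥ h)) := by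
        ring
    _ ≤ 2 * Fintype.card α * Fintype.card (ι → α) * ∑ i, h ⬝ᵥ ((1 - coordAvg α {i}) *ᵥ h) := by
        gcongr
    _ = _ := by ring

theorem efron_stein_complex {κ : Type*} [Fintype κ] (h : (ι → α) → κ → ℂ) :
    Fintype.card α * ∑ u, ∑ v, ∑ p, ‖h u p - h v p‖ ^ 2 ≤
      Fintype.card (ι → α) * ∑ u, ∑ i, ∑ c, ∑ p, ‖h u p - h (update u i c) p‖ ^ 2 := by
  have hnorm : ∀ z : ℂ, ‖z‖ ^ 2 = z.re ^ 2 + z.im ^ 2 := fun z => by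
    rw [Complex.sq_norm, Complex.normSq_apply, sq, sq]
  have hswap : ∑ u, ∑ i, ∑ c, ∑ p, ‖h u p - h (update u i c) p‖ ^ 2 =
      ∑ p, ∑ u, ∑ i, ∑ c, ‖h u p - h (update u i c) p‖ ^ 2 := by
    simp_rw [sum_comm_cycle (f := fun i c p => ‖h _ p - h (update _ i c) p‖ ^ 2)]
    exact sum_comm
  rw [sum_comm_cycle, hswap, mul_sum, mul_sum]
  refine sum_le_sum fun p _ => ?_
  simp only [hnorm, Complex.sub_re, Complex.sub_im, sum_add_distrib, mul_add]
  exact add_le_add (efron_stein _) (efron_stein _)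

end EfronStein

section TensorAction

variable {nA nB : ℕ}

theorem tensorApplyFst_eq_kronecker_mulVec (M : Matrix (Fin nA) (Fin nA) ℂ)
    (ψ : Fin nA × Fin nB → ℂ) :
    tensorApplyFst M ψ = (M ⊗ₖ (1 : Matrix (Fin nB) (Fin nB) ℂ)) *ᵥ ψ := by
  ext ⟨a, b⟩
  simp [tensorApplyFst, mulVec, dotProduct, Fintype.sum_prod_type, one_apply]

theorem tensorApplyFst_sub (M N : Matrix (Fin nA) (Fin nA) ℂ) (ψ : Fin nA × Fin nB → ℂ) :
    tensorApplyFst (M - N) ψ = tensorApplyFst M ψ - tensorApplyFst N ψ := by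
  ext p
  simp [tensorApplyFst, sub_mul, sum_sub_distrib]

theorem re_cInner_tensorApplyFst_mul_self {B : Matrix (Fin nA) (Fin nA) ℂ} (hB : B.IsHermitian)
    (ψ : Fin nA × Fin nB → ℂ) :
    (cInner ψ (tensorApplyFst (B * B) ψ)).re = ∑ p, ‖tensorApplyFst B ψ p‖ ^ 2 := by
  set K := B ⊗ₖ (1 : Matrix (Fin nB) (Fin nB) ℂ)
  have hK : Kᴴ = K := by simp [K, conjTranspose_kronecker, hB.eq]
  have : cInner ψ (tensorApplyFst (B * B) ψ) = star (K *ᵥ ψ) ⬝ᵥ (K *ᵥ ψ) := by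
    change star ψ ⬝ᵥ _ = _
    rw [tensorApplyFst_eq_kronecker_mulVec, ← mul_one (1 : Matrix (Fin nB) (Fin nB) ℂ),
      mul_kronecker_mul, ← mulVec_mulVec, dotProduct_mulVec, star_mulVec, hK]
  rw [this, tensorApplyFst_eq_kronecker_mulVec]
  simp [K, dotProduct, Complex.re_sum, Complex.sq_norm, Complex.normSq_apply]

end TensorAction

theorem global_variance_le_local_variance_general (q m : ℕ)
    (F : Type*) [Field F] [Fintype F] [DecidableEq F]
    (hcard : Fintype.card F = q)
    (nA nB : ℕ) (ψ : Fin nA × Fin nB → ℂ)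
    (A : (Fin m → F) → Matrix (Fin nA) (Fin nA) ℂ)
    (hpos : ∀ u, (A u).PosSemidef) :
    (1 / 2) *
        ((∑ u : Fin m → F, ∑ v : Fin m → F,
            (cInner ψ (tensorApplyFst ((A u - A v) * (A u - A v)) ψ)).re) /
          ((q : ℝ) ^ m * (q : ℝ) ^ m)) ≤
      (m : ℝ) * ((1 / 2) *
        ((∑ u : Fin m → F, ∑ i : Fin m, ∑ x : F,
            (cInner ψ
              (tensorApplyFst
                ((A u - A (Function.update u i (u i + x))) *
                  (A u - A (Function.update u i (u i + x)))) ψ)).re) /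
          ((q : ℝ) ^ m * m * q))) := by
  set φ : (Fin m → F) → Fin nA × Fin nB → ℂ := fun u => tensorApplyFst (A u) ψ
  have hterm : ∀ u v, (cInner ψ (tensorApplyFst ((A u - A v) * (A u - A v)) ψ)).re =
      ∑ p, ‖φ u p - φ v p‖ ^ 2 := fun u v => by
    rw [re_cInner_tensorApplyFst_mul_self ((hpos u).isHermitian.sub (hpos v).isHermitian),
      tensorApplyFst_sub]
    rfl
  have hshift : ∀ u i, ∑ x : F, ∑ p, ‖φ u p - φ (update u i (u i + x)) p‖ ^ 2 =
      ∑ c, ∑ p, ‖φ u p - φ (update u i c) p‖ ^ 2 := fun u i =>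
    Equiv.sum_comp (Equiv.addLeft (u i)) (fun c => ∑ p, ‖φ u p - φ (update u i c) p‖ ^ 2)
  simp only [hterm, hshift]
  have hES := efron_stein_complex φ
  rw [Fintype.card_fun, Fintype.card_fin, hcard] at hES
  push_cast at hES
  set G := ∑ u, ∑ v, ∑ p, ‖φ u p - φ v p‖ ^ 2
  set L := ∑ u, ∑ i, ∑ c, ∑ p, ‖φ u p - φ (update u i c) p‖ ^ 2
  have hq : (0 : ℝ) < q := by rw [← hcard]; exact_mod_cast Fintype.card_pos
  -- for `m = 0` the division by `m` is junk, but then `L` is an empty sum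
  have hlocal : (m : ℝ) * (L / (q ^ m * m * q)) = L / (q ^ m * q) := by
    rcases eq_or_ne m 0 with rfl | hm
    · simp [L]
    · field_simp
  rw [mul_left_comm, hlocal]
  refine mul_le_mul_of_nonneg_left ?_ (by norm_num)
  rw [div_le_div_iff₀ (by positivity) (by positivity)]
  nlinarith [mul_le_mul_of_nonneg_left hES (pow_pos hq m).le]

/-- local vs. global variance.  Let `ψ` be a vector in
`H_A ⊗ H_B` and, for each `u ∈ F_q^m`, let `A^u` be a Hermitian matrix with
`0 ≤ A^u ≤ I` acting on `H_A`.  Define the local variance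
`Var_local = (1/2)·E_{(u,v)∼C} ⟨ψ|(A^u − A^v)² ⊗ I|ψ⟩` over a random hypercube
edge (`v = u + x·e_i` with `u, i, x` uniform), and the global variance
`Var_global = (1/2)·E_{u,v} ⟨ψ|(A^u − A^v)² ⊗ I|ψ⟩` over two independent uniform
points.  Then `Var_global ≤ m · Var_local`. -/
theorem global_variance_le_local_variance (q m : ℕ) (hm : 0 < m)
    (F : Type*) [Field F] [Fintype F] [DecidableEq F]
    (hcard : Fintype.card F = q)
    (nA nB : ℕ) (ψ : Fin nA × Fin nB → ℂ)
    (A : (Fin m → F) → Matrix (Fin nA) (Fin nA) ℂ)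
    (hpos : ∀ u, (A u).PosSemidef)
    (hle : ∀ u, ((1 : Matrix (Fin nA) (Fin nA) ℂ) - A u).PosSemidef) :
    (1 / 2) *
        ((∑ u : Fin m → F, ∑ v : Fin m → F,
            (cInner ψ (tensorApplyFst ((A u - A v) * (A u - A v)) ψ)).re) /
          ((q : ℝ) ^ m * (q : ℝ) ^ m)) ≤
      (m : ℝ) * ((1 / 2) *
        ((∑ u : Fin m → F, ∑ i : Fin m, ∑ x : F,
            (cInner ψ
              (tensorApplyFst
                ((A u - A (Function.update u i (u i + x))) *
                  (A u - A (Function.update u i (u i + x)))) ψ)).re) /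
          ((q : ℝ) ^ m * m * q))) :=
  global_variance_le_local_variance_general q m F hcard nA nB ψ A hpos
end

section
/- Let ρ be a density matrix and X Hermitian with 0 ≤ X ≤ I and Tr(Xρ) ≥ 1 − κ. Let 0 < θ < 1 and integers k, d with k ≥ 2d/θ, and define the matrix F(X) = Σ_{r=d+1}^k C(k,r) X^r (I−X)^{k−r}. Then Tr(F(X)ρ) ≥ 1 − κ/(1−θ) − exp(−θ²k/2). -/
/-!
Everything is read off the functional calculus of `X`, whose spectrum lies in `[0, 1]`.
With `ε = exp (-θ²k/2)`, the polynomial `F` satisfies `1 - ε - (1 - t)/(1 - θ) ≤ F t` on `[0, 1]`: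
for `t ≥ θ` because `1 - F t` is the lower tail `ℙ[Bin(k, t) ≤ d]`, which Hoeffding's inequality
bounds by `ε`, and for `t < θ` because the left side is negative. This linear minorant is Markov's
inequality in disguise. It lifts to `(1 - ε) • 1 - (1 - θ)⁻¹ • (1 - X) ≤ F(X)`, and pairing with the
density matrix `ρ` gives `Tr(F(X)ρ) ≥ 1 - ε - (1 - Tr(Xρ))/(1 - θ) ≥ 1 - ε - κ/(1 - θ)`.
-/

open Real Finset
open scoped ComplexOrder MatrixOrder

/-- The function `F` of the statement: `F t = ℙ[Bin(k, t) > d]`. -/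
noncomputable def binomialUpperTail (k d : ℕ) (t : ℝ) : ℝ :=
  ∑ r ∈ Icc (d + 1) k, k.choose r * t ^ r * (1 - t) ^ (k - r)

section Binomial

variable {k d : ℕ} {p : ℝ}

lemma one_sub_add_mul_exp_le (hp0 : 0 ≤ p) (hp1 : p ≤ 1) (t : ℝ) :
    1 - p + p * exp t ≤ exp (p * t + t ^ 2 / 8) := by
  set b : Bool → ℝ := fun x => if x then 1 else 0
  have hoeffding := (ProbabilityTheory.hasSubgaussianMGF_of_mem_Icc
    (μ := ProbabilityTheory.bernoulliMeasure true false ⟨p, hp0, hp1⟩) (X := b) (a := 0) (b := 1)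
    Measurable.of_discrete.aemeasurable
    (MeasureTheory.ae_of_all _ fun x => by cases x <;> simp [b])).mgf_le t
  simp only [ProbabilityTheory.mgf, ProbabilityTheory.integral_bernoulliMeasure, b] at hoeffding
  norm_num at hoeffding
  have h1 : exp (p * t) * exp (t * (1 - p)) = exp t := by rw [← exp_add]; ring_nf
  have h2 : exp (p * t) * exp (-(t * p)) = 1 := by rw [← exp_add]; ring_nf; exact exp_zero
  calc 1 - p + p * exp t
      = exp (p * t) * (p * exp (t * (1 - p)) + (1 - p) * exp (-(t * p))) := by
        linear_combination -p * h1 - (1 - p) * h2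
    _ ≤ exp (p * t) * exp (t ^ 2 / 8) := by gcongr; exact hoeffding.trans_eq (by ring_nf)
    _ = exp (p * t + t ^ 2 / 8) := (exp_add _ _).symm

lemma sum_choose_mul_pow_mul_one_sub_pow (k : ℕ) (t : ℝ) :
    ∑ r ∈ range (k + 1), k.choose r * t ^ r * (1 - t) ^ (k - r) = 1 := by
  have h := add_pow t (1 - t) k
  rw [add_sub_cancel, one_pow] at h
  exact (sum_congr rfl fun r _ => by ring).trans h.symm

lemma binomialUpperTail_eq_one_sub (k d : ℕ) (t : ℝ) :
    binomialUpperTail k d t =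
      1 - ∑ r ∈ range (k + 1) with r ≤ d, k.choose r * t ^ r * (1 - t) ^ (k - r) := by
  have hIcc : Icc (d + 1) k = {r ∈ range (k + 1) | ¬r ≤ d} := by
    ext r; simp only [mem_Icc, mem_filter, mem_range]; omega
  rw [binomialUpperTail, hIcc, eq_sub_iff_add_eq', sum_filter_add_sum_filter_not,
    sum_choose_mul_pow_mul_one_sub_pow]

lemma continuous_binomialUpperTail (k d : ℕ) : Continuous (binomialUpperTail k d) := by
  unfold binomialUpperTail; fun_prop

lemma binomialUpperTail_nonneg (k d : ℕ) {t : ℝ} (ht0 : 0 ≤ t) (ht1 : t ≤ 1) :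
    0 ≤ binomialUpperTail k d t :=
  sum_nonneg fun r _ => mul_nonneg (by positivity) (pow_nonneg (sub_nonneg.2 ht1) _)

lemma sum_choose_mul_pow_le_exp_mul (hp0 : 0 ≤ p) (hp1 : p ≤ 1) {s : ℝ} (hs : 0 ≤ s) :
    ∑ r ∈ range (k + 1) with r ≤ d, k.choose r * p ^ r * (1 - p) ^ (k - r) ≤
      exp (s * d) * (1 - p + p * exp (-s)) ^ k := by
  calc ∑ r ∈ range (k + 1) with r ≤ d, k.choose r * p ^ r * (1 - p) ^ (k - r)
      ≤ ∑ r ∈ range (k + 1) with r ≤ d,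
          exp (s * d) * (k.choose r * (p * exp (-s)) ^ r * (1 - p) ^ (k - r)) := by
        refine sum_le_sum fun r hr => ?_
        have hrd : (r : ℝ) ≤ d := by exact_mod_cast (mem_filter.1 hr).2
        have hweight : 1 ≤ exp (s * d) * exp (-s) ^ r := by
          rw [← exp_nat_mul, ← exp_add]
          exact one_le_exp (by nlinarith)
        have hterm : 0 ≤ (k.choose r : ℝ) * p ^ r * (1 - p) ^ (k - r) := by positivity
        rw [mul_pow]
        nlinarith
    _ ≤ ∑ r ∈ range (k + 1),
          exp (s * d) * (k.choose r * (p * exp (-s)) ^ r * (1 - p) ^ (k - r)) :=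
        sum_le_sum_of_subset_of_nonneg (filter_subset _ _) fun _ _ _ => by positivity
    _ = exp (s * d) * (1 - p + p * exp (-s)) ^ k := by
        rw [← mul_sum, add_comm (1 - p), add_pow]
        simp only [mul_comm, mul_left_comm]

/-- Hoeffding's inequality `ℙ[Bin(k, p) ≤ (p - c) k] ≤ exp (-2c²k)`. -/
lemma sum_choose_mul_pow_le_exp (hp0 : 0 ≤ p) (hp1 : p ≤ 1) {c : ℝ} (hc : 0 ≤ c)
    (hd : d ≤ (p - c) * k) :
    ∑ r ∈ range (k + 1) with r ≤ d, k.choose r * p ^ r * (1 - p) ^ (k - r) ≤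
      exp (-2 * c ^ 2 * k) := by
  have hmgf : 0 ≤ 1 - p + p * exp (-(4 * c)) := by nlinarith [exp_pos (-(4 * c))]
  calc ∑ r ∈ range (k + 1) with r ≤ d, k.choose r * p ^ r * (1 - p) ^ (k - r)
      ≤ exp (4 * c * d) * (1 - p + p * exp (-(4 * c))) ^ k :=
        sum_choose_mul_pow_le_exp_mul hp0 hp1 (by positivity)
    _ ≤ exp (4 * c * d) * exp (p * -(4 * c) + (-(4 * c)) ^ 2 / 8) ^ k := by
        gcongr
        exact one_sub_add_mul_exp_le hp0 hp1 _
    _ = exp (4 * c * d + k * (2 * c ^ 2 - 4 * c * p)) := by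
        rw [← exp_nat_mul, ← exp_add]; ring_nf
    _ ≤ exp (-2 * c ^ 2 * k) := by
        gcongr
        nlinarith [mul_le_mul_of_nonneg_left hd (by positivity : (0 : ℝ) ≤ 4 * c)]

end Binomial

section Minorant

variable {k d : ℕ} {θ t : ℝ}

lemma one_sub_exp_le_binomialUpperTail (hθ0 : 0 < θ) (hθt : θ ≤ t) (ht1 : t ≤ 1)
    (hd : 2 * d ≤ θ * k) :
    1 - exp (-θ ^ 2 * k / 2) ≤ binomialUpperTail k d t := by
  have hk : (0 : ℝ) ≤ k := k.cast_nonneg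
  have hdc : (d : ℝ) ≤ (t - θ / 2) * k := by nlinarith
  have htail := sum_choose_mul_pow_le_exp (hθ0.le.trans hθt) ht1 (by positivity) hdc
  rw [show -2 * (θ / 2) ^ 2 * k = -θ ^ 2 * k / 2 by ring] at htail
  rw [binomialUpperTail_eq_one_sub]
  linarith

lemma one_sub_exp_sub_le_binomialUpperTail (hθ0 : 0 < θ) (hθ1 : θ < 1) (hd : 2 * d ≤ θ * k)
    (ht0 : 0 ≤ t) (ht1 : t ≤ 1) :
    1 - exp (-θ ^ 2 * k / 2) - (1 - θ)⁻¹ * (1 - t) ≤ binomialUpperTail k d t := by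
  have hθ1' : 0 < 1 - θ := sub_pos.2 hθ1
  rcases lt_or_ge t θ with htθ | hθt
  · have h1 : 1 < (1 - θ)⁻¹ * (1 - t) := by
      rw [inv_mul_eq_div, one_lt_div hθ1']; linarith
    linarith [exp_pos (-θ ^ 2 * k / 2), binomialUpperTail_nonneg k d ht0 ht1]
  · have h1 : 0 ≤ (1 - θ)⁻¹ * (1 - t) := mul_nonneg (inv_nonneg.2 hθ1'.le) (by linarith)
    linarith [one_sub_exp_le_binomialUpperTail hθ0 hθt ht1 hd]

end Minorant

section FunctionalCalculus

variable {A : Type*} [TopologicalSpace A] [Ring A] [StarRing A] [Algebra ℝ A]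
  [ContinuousFunctionalCalculus ℝ A IsSelfAdjoint]

lemma spectrum_subset_Icc_of_nonneg_of_le_one [PartialOrder A] [StarOrderedRing A]
    [NonnegSpectrumClass ℝ A] {a : A} (h0 : 0 ≤ a) (h1 : a ≤ 1) :
    spectrum ℝ a ⊆ Set.Icc 0 1 := fun x hx =>
  ⟨spectrum_nonneg_of_nonneg h0 hx, (le_algebraMap_iff_spectrum_le (r := (1 : ℝ))).1
    (by simpa using h1) x hx⟩

open Polynomial in
lemma cfc_binomialUpperTail (k d : ℕ) (a : A) (ha : IsSelfAdjoint a) :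
    cfc (binomialUpperTail k d) a =
      ∑ r ∈ Icc (d + 1) k, k.choose r • (a ^ r * (1 - a) ^ (k - r)) := by
  have hF : binomialUpperTail k d =
      (∑ r ∈ Icc (d + 1) k, (k.choose r : ℝ[X]) * X ^ r * (1 - X) ^ (k - r)).eval := by
    ext t
    simp [binomialUpperTail, eval_finsetSum]
  rw [hF, cfc_polynomial _ a]
  simp [nsmul_eq_mul, mul_assoc]

lemma cfc_const_sub_mul_one_sub (b c : ℝ) (a : A) (ha : IsSelfAdjoint a) :
    cfc (fun t : ℝ => b - c * (1 - t)) a = algebraMap ℝ A b - c • (1 - a) := by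
  rw [cfc_sub .., cfc_const .., cfc_const_mul .., cfc_sub .., cfc_const_one .., cfc_id' ..]

end FunctionalCalculus

section Trace

variable {𝕜 n : Type*} [RCLike 𝕜] [Fintype n]

lemma Matrix.PosSemidef.trace_mul_nonneg {A B : Matrix n n 𝕜} (hA : A.PosSemidef)
    (hB : B.PosSemidef) : 0 ≤ (A * B).trace := by
  classical
  obtain ⟨s, rfl⟩ := CStarAlgebra.nonneg_iff_eq_star_mul_self.mp hA.nonneg
  rw [Matrix.mul_assoc, Matrix.trace_mul_comm, Matrix.star_eq_conjTranspose]
  exact (hB.mul_mul_conjTranspose_same s).trace_nonneg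

lemma Matrix.PosSemidef.monotone_re_trace_mul {ρ : Matrix n n 𝕜} (hρ : ρ.PosSemidef) :
    Monotone fun A : Matrix n n 𝕜 => RCLike.re (A * ρ).trace := by
  intro A B hAB
  have := (RCLike.nonneg_iff.1 ((Matrix.le_iff.1 hAB).trace_mul_nonneg hρ)).1
  simpa [Matrix.sub_mul, Matrix.trace_sub] using this

end Trace

theorem trace_binomial_functional_calculus_general (n : ℕ)
    (ρ X : Matrix (Fin n) (Fin n) ℂ)
    (hρ : ρ.PosSemidef) (hρtr : ρ.trace = 1)
    (hX : X.PosSemidef) (hXI : ((1 : Matrix (Fin n) (Fin n) ℂ) - X).PosSemidef)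
    (κ θ : ℝ) (k d : ℕ)
    (hθ0 : 0 < θ) (hθ1 : θ < 1)
    (hkd : 2 * (d : ℝ) / θ ≤ (k : ℝ))
    (htr : 1 - κ ≤ ((X * ρ).trace).re) :
    1 - κ / (1 - θ) - Real.exp (-θ ^ 2 * k / 2) ≤
      (((∑ r ∈ Finset.Icc (d + 1) k,
            (k.choose r : ℂ) • (X ^ r * (1 - X) ^ (k - r))) * ρ).trace).re := by
  set ε := exp (-θ ^ 2 * k / 2)
  have hd2 : 2 * (d : ℝ) ≤ θ * k := by rw [div_le_iff₀ hθ0] at hkd; linarith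
  have hspec := spectrum_subset_Icc_of_nonneg_of_le_one hX.nonneg (Matrix.le_iff.2 hXI)
  have hF : (∑ r ∈ Icc (d + 1) k, (k.choose r : ℂ) • (X ^ r * (1 - X) ^ (k - r))) =
      cfc (binomialUpperTail k d) X := by
    simp only [cfc_binomialUpperTail k d X hX.isHermitian, Nat.cast_smul_eq_nsmul]
  have hminorant :
      algebraMap ℝ _ (1 - ε) - (1 - θ)⁻¹ • (1 - X) ≤ cfc (binomialUpperTail k d) X := by
    rw [← cfc_const_sub_mul_one_sub _ _ X hX.isHermitian]
    exact cfc_mono (fun t ht =>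
      one_sub_exp_sub_le_binomialUpperTail hθ0 hθ1 hd2 (hspec ht).1 (hspec ht).2)
      (hg := (continuous_binomialUpperTail k d).continuousOn)
  have htrace := hρ.monotone_re_trace_mul hminorant
  simp only [Algebra.algebraMap_eq_smul_one, Matrix.sub_mul, Matrix.smul_mul, Matrix.one_mul,
    Matrix.trace_sub, Matrix.trace_smul, hρtr, RCLike.re_to_complex, Complex.sub_re,
    Complex.smul_re, Complex.one_re, smul_eq_mul, mul_one] at htrace
  have hκ : (1 - θ)⁻¹ * (1 - (X * ρ).trace.re) ≤ κ / (1 - θ) := by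
    rw [inv_mul_eq_div]; gcongr; linarith
  rw [hF]
  linarith

/-- Let `ρ` be a density matrix and `X` Hermitian with
`0 ≤ X ≤ I` and `Tr(Xρ) ≥ 1 − κ`.  Let `0 < θ < 1` and `k, d` positive integers
with `k ≥ 2d/θ`, and define (by functional calculus, i.e. polynomially in `X`)
`F(X) = ∑_{r=d+1}^k C(k,r) X^r (I−X)^{k−r}`.  Then
`Tr(F(X)ρ) ≥ 1 − κ/(1−θ) − exp(−θ²k/2)`. -/
theorem trace_binomial_functional_calculus (n : ℕ)
    (ρ X : Matrix (Fin n) (Fin n) ℂ)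
    (hρ : ρ.PosSemidef) (hρtr : ρ.trace = 1)
    (hX : X.PosSemidef) (hXI : ((1 : Matrix (Fin n) (Fin n) ℂ) - X).PosSemidef)
    (κ θ : ℝ) (k d : ℕ)
    (hθ0 : 0 < θ) (hθ1 : θ < 1) (hk : 0 < k) (hd : 0 < d)
    (hkd : 2 * (d : ℝ) / θ ≤ (k : ℝ))
    (htr : 1 - κ ≤ ((X * ρ).trace).re) :
    1 - κ / (1 - θ) - Real.exp (-θ ^ 2 * k / 2) ≤
      (((∑ r ∈ Finset.Icc (d + 1) k,
            (k.choose r : ℂ) • (X ^ r * (1 - X) ^ (k - r))) * ρ).trace).re :=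
  trace_binomial_functional_calculus_general n ρ X hρ hρtr hX hXI κ θ k d hθ0 hθ1 hkd htr
end
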